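/- arXiv:1509.06422 — 2 statements merged into one kernel-verified Lean document; each statement's English description precedes it below -/
import Mathlib

section
/- Let γ ∈ [0,1) and ω, a be real with ω² + a² > 0. If there exists a stationary L²-solution (r_t)_{t∈ℤ} of the GQARCH equations r_t = ζ_t σ_t, σ_t² = ω² + (a + ∑_{j≥1} b_j r_{t−j})² + γ σ_{t−1}², then necessarily ∑_{j≥1} b_j² < 1 − γ. -/
open MeasureTheory ProbabilityTheory Filter Set
open scoped ENNReal Topology

noncomputable section

/-- The σ-algebra generated by the random variables `ζ s`, `s ≤ t`. -/
def natFilt {Ω : Type*} [MeasurableSpace Ω] (ζ : ℤ → Ω → ℝ) (t : ℤ) : MeasurableSpace Ω :=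
  ⨆ s : ℤ, ⨆ _ : s ≤ t, MeasurableSpace.comap (ζ s) inferInstance

variable {Ω : Type*} [MeasurableSpace Ω]

/-- `X_t = ∑_{j≥1} b_j r_{t-j}` (pointwise `tsum`; `b j` stands for `b_{j+1}`). -/
def Xgen (r : ℤ → Ω → ℝ) (b : ℕ → ℝ) (t : ℤ) (ω : Ω) : ℝ :=
  ∑' j : ℕ, b j * r (t - ((j : ℤ) + 1)) ω

/-- `σ_t² = ∑_{ℓ≥0} γ^ℓ (ω² + (a + X_{t-ℓ})²)` (pointwise `tsum`). -/
def sigmaSqGen (r : ℤ → Ω → ℝ) (γ w a : ℝ) (b : ℕ → ℝ) (t : ℤ) (ω : Ω) : ℝ :=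
  ∑' ℓ : ℕ, γ ^ ℓ * (w ^ 2 + (a + Xgen r b (t - (ℓ : ℤ)) ω) ^ 2)

/-- A stationary (and ergodic) solution of the GQARCH equations
`r_t = ζ_t σ_t`, `σ_t² = ω² + (a + ∑_{j≥1} b_j r_{t-j})² + γ σ_{t-1}²`, in the sense of
Definition 2.1: a stationary ergodic martingale difference sequence `(r_t, F_t)`,
`F_t = σ(ζ_s, s ≤ t)`, with `E r_t² < ∞`, `E[r_t² | F_{t-1}] = σ_t²`, such that `X_t`
converges in `L²`, the series for `σ_t²` converges in `L¹`, and `r_t = ζ_t σ_t`.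
Stationarity and ergodicity are encoded by the ergodic shift `T`. -/
structure IsGQARCHStationarySolution (μ : Measure Ω) (ζ : ℤ → Ω → ℝ) (T : Ω → Ω)
    (γ w a : ℝ) (b : ℕ → ℝ) (r : ℤ → Ω → ℝ) : Prop where
  adapted : ∀ t, Measurable[natFilt ζ t] (r t)
  memL2 : ∀ t, MemLp (r t) 2 μ
  shift : ∀ t ω', r (t + 1) ω' = r t (T ω')
  mds : ∀ t : ℤ, μ[r t | natFilt ζ (t - 1)] =ᵐ[μ] 0
  condvar : ∀ t : ℤ,
    μ[fun ω' => (r t ω') ^ 2 | natFilt ζ (t - 1)] =ᵐ[μ] fun ω' => sigmaSqGen r γ w a b t ω'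
  seriesX_L2 : ∀ t : ℤ, Tendsto (fun N =>
    eLpNorm (fun ω' => Xgen r b t ω' -
      ∑ j ∈ Finset.range N, b j * r (t - ((j : ℤ) + 1)) ω') 2 μ) atTop (𝓝 0)
  seriesSigma_L1 : ∀ t : ℤ, Tendsto (fun N =>
    eLpNorm (fun ω' => sigmaSqGen r γ w a b t ω' -
      ∑ ℓ ∈ Finset.range N, γ ^ ℓ * (w ^ 2 + (a + Xgen r b (t - (ℓ : ℤ)) ω') ^ 2)) 1 μ)
    atTop (𝓝 0)
  eqn : ∀ t : ℤ, r t =ᵐ[μ] fun ω' => ζ t ω' * Real.sqrt (sigmaSqGen r γ w a b t ω')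


lemma measurable_tsum_real {f : ℕ → Ω → ℝ} (hf : ∀ n, Measurable (f n)) :
    Measurable fun ω => ∑' n, f n ω := by
  classical
  have hA : MeasurableSet {ω | Summable fun n => f n ω} := by
    have h1 : {ω | Summable fun n => f n ω}
        = {ω | (∑' n, (‖f n ω‖₊ : ℝ≥0∞)) < ⊤} := by
      ext ω
      simp only [Set.mem_setOf_eq, lt_top_iff_ne_top,
        ENNReal.tsum_coe_ne_top_iff_summable]
      constructor
      · intro h
        rw [← NNReal.summable_coe]
        simp only [coe_nnnorm, Real.norm_eq_abs]
        exact h.abs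
      · intro h
        have h2 := NNReal.summable_coe.mpr h
        simp only [coe_nnnorm, Real.norm_eq_abs] at h2
        exact summable_abs_iff.mp h2
    rw [h1]
    exact measurableSet_lt
      (Measurable.ennreal_tsum fun n => (hf n).nnnorm.coe_nnreal_ennreal) measurable_const
  have hg : Measurable fun ω => liminf (fun N => ∑ j ∈ Finset.range N, f j ω) atTop :=
    Measurable.liminf fun N => Finset.measurable_sum _ fun j _ => hf j
  have heq : (fun ω => ∑' n, f n ω)
      = {ω | Summable fun n => f n ω}.piecewise
        (fun ω => liminf (fun N => ∑ j ∈ Finset.range N, f j ω) atTop) (fun _ => 0) := by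
    ext ω
    by_cases h : Summable fun n => f n ω
    · simp only [Set.piecewise, Set.mem_setOf_eq, h, if_true]
      exact (h.hasSum.tendsto_sum_nat.liminf_eq).symm
    · simp only [Set.piecewise, Set.mem_setOf_eq, h, if_false]
      exact tsum_eq_zero_of_not_summable h
  rw [heq]
  exact Measurable.piecewise hA hg measurable_const

lemma memL2_mul_integrable {f g : Ω → ℝ} (hf : MemLp f 2 μ) (hg : MemLp g 2 μ) :
    Integrable (fun ω => f ω * g ω) μ := by
  rw [← memLp_one_iff_integrable]
  refine ⟨hf.1.mul hg.1, ?_⟩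
  calc eLpNorm (fun ω => f ω * g ω) 1 μ ≤ eLpNorm f 2 μ * eLpNorm g 2 μ :=
        (by simpa using eLpNorm_le_eLpNorm_mul_eLpNorm'_of_norm (p := 2) (q := 2) hf.1 hg.1 (· * ·) 1
              (Filter.Eventually.of_forall fun ω => by
                simp [Real.norm_eq_abs, abs_mul]))
    _ < ⊤ := ENNReal.mul_lt_top hf.2 hg.2

lemma tendsto_integral_of_eLpNorm_one_sub {g : Ω → ℝ} {G : ℕ → Ω → ℝ}
    (hG : ∀ N, Integrable (G N) μ) (hg : Integrable g μ)
    (h : Tendsto (fun N => eLpNorm (fun ω => g ω - G N ω) 1 μ) atTop (𝓝 0)) :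
    Tendsto (fun N => ∫ ω, G N ω ∂μ) atTop (𝓝 (∫ ω, g ω ∂μ)) := by
  refine tendsto_integral_of_L1' g hg.1 (Filter.Eventually.of_forall hG) ?_
  have heq : ∀ N, eLpNorm (G N - g) 1 μ = eLpNorm (fun ω => g ω - G N ω) 1 μ := fun N =>
    eLpNorm_sub_comm (G N) g 1 μ
  rw [tendsto_congr heq]
  exact h

/-- Necessity of `∑_{j≥1} b_j² < 1 − γ` for the existence of a stationary `L²`-solution of
the GQARCH equations (with standardized i.i.d. innovations and `ω² + a² > 0`). -/
theorem gqarch_L2_solution_necessary_condition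
    {Ω : Type*} [MeasurableSpace Ω] (μ : Measure Ω) [IsProbabilityMeasure μ]
    (ζ : ℤ → Ω → ℝ) (T : Ω → Ω) (γ w a : ℝ) (b : ℕ → ℝ) (r : ℤ → Ω → ℝ)
    (hζmeas : ∀ t, Measurable (ζ t))
    (hζindep : iIndepFun ζ μ)
    (hζident : ∀ s t, IdentDistrib (ζ s) (ζ t) μ μ)
    (hζL2 : MemLp (ζ 0) 2 μ)
    (hζmean : ∫ ω, ζ 0 ω ∂μ = 0)
    (hζvar : ∫ ω, (ζ 0 ω) ^ 2 ∂μ = 1)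
    (hT : Ergodic T μ)
    (hshift : ∀ t ω, ζ (t + 1) ω = ζ t (T ω))
    (hγ0 : 0 ≤ γ) (hγ1 : γ < 1) (hwa : w ^ 2 + a ^ 2 > 0)
    (hsol : IsGQARCHStationarySolution μ ζ T γ w a b r) :
    Summable (fun j => (b j) ^ 2) ∧ (∑' j : ℕ, (b j) ^ 2) < 1 - γ := by
  classical
  obtain ⟨hadp, hL2, hshiftr, hmds, hcondvar, hserX, hserS, _⟩ := hsol
  have hF : ∀ t, natFilt ζ t ≤ ‹MeasurableSpace Ω› := fun t =>
    iSup_le fun s => iSup_le fun _ => measurable_iff_comap_le.mp (hζmeas s)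
  have hFmono : ∀ {s t : ℤ}, s ≤ t → natFilt ζ s ≤ natFilt ζ t := fun {s t} h =>
    iSup_le fun u => iSup_le fun hu => le_iSup_of_le u (le_iSup_of_le (hu.trans h) le_rfl)
  have hrmeas : ∀ t, Measurable (r t) := fun t => (hadp t).mono (hF t) le_rfl
  -- means are zero
  have hrmean : ∀ t : ℤ, ∫ ω', r t ω' ∂μ = 0 := by
    intro t
    rw [← integral_condExp (hF (t - 1)) (f := r t), integral_congr_ae (hmds t)]
    simp
  -- orthogonality
  have hmul_int : ∀ s t : ℤ, Integrable (fun ω' => r s ω' * r t ω') μ := fun s t =>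
    memL2_mul_integrable (hL2 s) (hL2 t)
  have horth : ∀ s t : ℤ, s ≠ t → ∫ ω', r s ω' * r t ω' ∂μ = 0 := by
    suffices h : ∀ s t : ℤ, s < t → ∫ ω', r s ω' * r t ω' ∂μ = 0 by
      intro s t hst
      rcases hst.lt_or_gt with h' | h'
      · exact h s t h'
      · rw [show (fun ω' => r s ω' * r t ω') = fun ω' => r t ω' * r s ω' from
          funext fun ω' => mul_comm _ _]
        exact h t s h'
    intro s t hst
    have hsm : StronglyMeasurable[natFilt ζ (t - 1)] (r s) :=
      ((hadp s).mono (hFmono (by omega)) le_rfl).stronglyMeasurable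
    have hkey := condExp_mul_of_stronglyMeasurable_left (μ := μ) (m := natFilt ζ (t - 1)) hsm
      (hmul_int s t) ((hL2 t).integrable one_le_two)
    have h0 : (r s * μ[r t | natFilt ζ (t - 1)] : Ω → ℝ) =ᵐ[μ] 0 := by
      filter_upwards [hmds t] with ω' hω'
      simp only [Pi.mul_apply, hω', Pi.zero_apply, mul_zero]
    calc ∫ ω', r s ω' * r t ω' ∂μ
        = ∫ ω', (μ[(r s * r t : Ω → ℝ) | natFilt ζ (t - 1)]) ω' ∂μ :=
          (integral_condExp (hF (t - 1))).symm
      _ = ∫ ω', (0 : Ω → ℝ) ω' ∂μ := integral_congr_ae (hkey.trans h0)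
      _ = 0 := by simp
  -- stationarity machinery
  have hmap : μ.map T = μ := hT.toMeasurePreserving.map_eq
  have hTmeas : Measurable T := hT.toMeasurePreserving.measurable
  have hstep : ∀ (g : ℤ → Ω → ℝ), (∀ u ω', g (u + 1) ω' = g u (T ω')) →
      (∀ u, AEStronglyMeasurable (g u) μ) →
      ∀ u, ∫ ω', g (u + 1) ω' ∂μ = ∫ ω', g u ω' ∂μ := by
    intro g hg hm u
    have h1 : ∫ ω', g u ω' ∂μ = ∫ ω', g u (T ω') ∂μ := by
      conv_lhs => rw [← hmap]
      exact integral_map hTmeas.aemeasurable (by rw [hmap]; exact hm u)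
    calc ∫ ω', g (u + 1) ω' ∂μ = ∫ ω', g u (T ω') ∂μ := by simp only [hg]
      _ = ∫ ω', g u ω' ∂μ := h1.symm
  have hstat : ∀ (g : ℤ → Ω → ℝ), (∀ u ω', g (u + 1) ω' = g u (T ω')) →
      (∀ u, AEStronglyMeasurable (g u) μ) →
      ∀ u, ∫ ω', g u ω' ∂μ = ∫ ω', g 0 ω' ∂μ := by
    intro g hg hm u
    induction u using Int.induction_on with
    | zero => rfl
    | succ n ih => rw [hstep g hg hm n]; exact ih
    | pred n ih =>
        have h := hstep g hg hm (-(n : ℤ) - 1)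
        rw [show (-(n : ℤ) - 1) + 1 = -(n : ℤ) by ring] at h
        rw [← h]; exact ih
  have hm_const : ∀ u : ℤ, ∫ ω', (r u ω') ^ 2 ∂μ = ∫ ω', (r 0 ω') ^ 2 ∂μ :=
    hstat (fun u ω' => (r u ω') ^ 2) (fun u ω' => by simp only [hshiftr])
      (fun u => ((hrmeas u).pow_const 2).aestronglyMeasurable)
  -- X: measurability and integrability
  have hXmeas : ∀ t, Measurable (Xgen r b t) := by
    intro t
    unfold Xgen
    exact measurable_tsum_real fun j => (hrmeas _).const_mul (b j)
  have hSmem : ∀ (t : ℤ) (N : ℕ),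
      MemLp (fun ω' => ∑ j ∈ Finset.range N, b j * r (t - ((j : ℤ) + 1)) ω') 2 μ := fun t N =>
    memLp_finset_sum _ fun j _ => (hL2 _).const_mul (b j)
  have hXmem : ∀ t : ℤ, MemLp (Xgen r b t) 2 μ := by
    intro t
    obtain ⟨N, hN⟩ :=
      ((hserX t).eventually_lt_const (show (0 : ℝ≥0∞) < 1 by norm_num)).exists
    have hdiff : MemLp (fun ω' => Xgen r b t ω' -
        ∑ j ∈ Finset.range N, b j * r (t - ((j : ℤ) + 1)) ω') 2 μ :=
      ⟨(hXmeas t).aestronglyMeasurable.sub (hSmem t N).1, hN.trans_le le_top⟩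
    have heq : Xgen r b t = (fun ω' => Xgen r b t ω' -
        ∑ j ∈ Finset.range N, b j * r (t - ((j : ℤ) + 1)) ω') +
        (fun ω' => ∑ j ∈ Finset.range N, b j * r (t - ((j : ℤ) + 1)) ω') := by
      funext ω'; simp
    rw [heq]
    exact hdiff.add (hSmem t N)
  have hXint : ∀ t, Integrable (Xgen r b t) μ := fun t => (hXmem t).integrable one_le_two
  have hXsqint : ∀ t, Integrable (fun ω' => (Xgen r b t ω') ^ 2) μ := fun t =>
    (hXmem t).integrable_sq
  -- moments of the partial sums
  have hSmean : ∀ (t : ℤ) (N : ℕ),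
      ∫ ω', (∑ j ∈ Finset.range N, b j * r (t - ((j : ℤ) + 1)) ω') ∂μ = 0 := by
    intro t N
    rw [integral_finset_sum _ fun j _ => ((hL2 _).integrable one_le_two).const_mul (b j)]
    refine Finset.sum_eq_zero fun j _ => ?_
    rw [integral_const_mul, hrmean, mul_zero]
  have hS2 : ∀ (t : ℤ) (N : ℕ),
      ∫ ω', (∑ j ∈ Finset.range N, b j * r (t - ((j : ℤ) + 1)) ω') ^ 2 ∂μ
        = (∑ j ∈ Finset.range N, (b j) ^ 2) * ∫ ω', (r 0 ω') ^ 2 ∂μ := by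
    intro t N
    calc ∫ ω', (∑ j ∈ Finset.range N, b j * r (t - ((j : ℤ) + 1)) ω') ^ 2 ∂μ
        = ∫ ω', ∑ j ∈ Finset.range N, ∑ k ∈ Finset.range N,
            (b j * b k) * (r (t - ((j : ℤ) + 1)) ω' * r (t - ((k : ℤ) + 1)) ω') ∂μ := by
          refine integral_congr_ae (Filter.Eventually.of_forall fun ω' => ?_)
          dsimp only
          rw [sq, Finset.sum_mul_sum]
          exact Finset.sum_congr rfl fun j _ => Finset.sum_congr rfl fun k _ => by ring
      _ = ∑ j ∈ Finset.range N, ∑ k ∈ Finset.range N,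
            (b j * b k) * ∫ ω', r (t - ((j : ℤ) + 1)) ω' * r (t - ((k : ℤ) + 1)) ω' ∂μ := by
          rw [integral_finset_sum _ fun j _ =>
            integrable_finset_sum _ fun k _ => (hmul_int _ _).const_mul _]
          refine Finset.sum_congr rfl fun j _ => ?_
          rw [integral_finset_sum _ fun k _ => (hmul_int _ _).const_mul _]
          exact Finset.sum_congr rfl fun k _ => integral_const_mul _ _
      _ = ∑ j ∈ Finset.range N, (b j) ^ 2 * ∫ ω', (r 0 ω') ^ 2 ∂μ := by
          refine Finset.sum_congr rfl fun j hj => ?_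
          have hrr : ∫ ω', r (t - ((j : ℤ) + 1)) ω' * r (t - ((j : ℤ) + 1)) ω' ∂μ
              = ∫ ω', (r 0 ω') ^ 2 ∂μ := by
            rw [← hm_const (t - ((j : ℤ) + 1))]
            exact integral_congr_ae (Filter.Eventually.of_forall fun ω' => (sq _).symm)
          rw [Finset.sum_eq_single_of_mem j hj
            (fun k _ hkj => by rw [horth _ _ (by omega), mul_zero]), hrr]
          ring
      _ = (∑ j ∈ Finset.range N, (b j) ^ 2) * ∫ ω', (r 0 ω') ^ 2 ∂μ := (Finset.sum_mul _ _ _).symm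
  -- the L² norm identity on Lp
  have hnormLp : ∀ f : Lp ℝ 2 μ, ‖f‖ ^ 2 = ∫ ω', (f ω') ^ 2 ∂μ := by
    intro f
    rw [← real_inner_self_eq_norm_sq, L2.inner_def]
    refine integral_congr_ae (Filter.Eventually.of_forall fun ω' => ?_)
    simp [RCLike.inner_apply, conj_trivial, sq]
  -- convergence of second moments
  have hXsq_lim : ∀ t : ℤ, Tendsto
      (fun N => (∑ j ∈ Finset.range N, (b j) ^ 2) * ∫ ω', (r 0 ω') ^ 2 ∂μ) atTop
      (𝓝 (∫ ω', (Xgen r b t ω') ^ 2 ∂μ)) := by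
    intro t
    have hZ : Tendsto (fun N => (hSmem t N).toLp _) atTop (𝓝 ((hXmem t).toLp _)) := by
      rw [tendsto_iff_dist_tendsto_zero]
      have hdist : ∀ N, dist ((hSmem t N).toLp _) ((hXmem t).toLp _)
          = (eLpNorm (fun ω' => Xgen r b t ω' -
              ∑ j ∈ Finset.range N, b j * r (t - ((j : ℤ) + 1)) ω') 2 μ).toReal := by
        intro N
        rw [dist_comm, dist_eq_norm, ← MemLp.toLp_sub, Lp.norm_toLp]
        rfl
      rw [tendsto_congr hdist]
      simpa [Function.comp_def] using (ENNReal.tendsto_toReal (by simp)).comp (hserX t)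
    have hnorm := (hZ.norm.pow 2)
    have h1 : ∀ N, ‖(hSmem t N).toLp _‖ ^ 2
        = (∑ j ∈ Finset.range N, (b j) ^ 2) * ∫ ω', (r 0 ω') ^ 2 ∂μ := by
      intro N
      rw [hnormLp, ← hS2 t N]
      refine integral_congr_ae (((hSmem t N).coeFn_toLp).mono fun ω' h => ?_)
      dsimp only
      rw [h]
    have h2 : ‖(hXmem t).toLp _‖ ^ 2 = ∫ ω', (Xgen r b t ω') ^ 2 ∂μ := by
      rw [hnormLp]
      refine integral_congr_ae (((hXmem t).coeFn_toLp).mono fun ω' h => ?_)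
      dsimp only
      rw [h]
    rw [h2] at hnorm
    exact (tendsto_congr h1).mp hnorm
  have hEX2const : ∀ t : ℤ, ∫ ω', (Xgen r b t ω') ^ 2 ∂μ = ∫ ω', (Xgen r b 0 ω') ^ 2 ∂μ :=
    fun t => tendsto_nhds_unique (hXsq_lim t) (hXsq_lim 0)
  -- means of X are zero
  have hXmean : ∀ t : ℤ, ∫ ω', Xgen r b t ω' ∂μ = 0 := by
    intro t
    have hL1 : Tendsto (fun N => eLpNorm (fun ω' => Xgen r b t ω' -
        ∑ j ∈ Finset.range N, b j * r (t - ((j : ℤ) + 1)) ω') 1 μ) atTop (𝓝 0) := by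
      refine tendsto_of_tendsto_of_tendsto_of_le_of_le tendsto_const_nhds (hserX t)
        (fun N => zero_le) (fun N => eLpNorm_le_eLpNorm_of_exponent_le one_le_two
          ((hXmeas t).aestronglyMeasurable.sub (hSmem t N).1))
    have hlim := tendsto_integral_of_eLpNorm_one_sub
      (fun N => (hSmem t N).integrable one_le_two) (hXint t) hL1
    have h0 : Tendsto (fun _ : ℕ => (0 : ℝ)) atTop (𝓝 (∫ ω', Xgen r b t ω' ∂μ)) :=
      (tendsto_congr fun N => hSmean t N).mp hlim
    exact tendsto_nhds_unique h0 tendsto_const_nhds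
  -- integral of (a + X s)²
  have haX_int : ∀ s : ℤ, Integrable (fun ω' => (a + Xgen r b s ω') ^ 2) μ := fun s =>
    ((memLp_const a).add (hXmem s)).integrable_sq
  have haX : ∀ s : ℤ, ∫ ω', (a + Xgen r b s ω') ^ 2 ∂μ
      = a ^ 2 + ∫ ω', (Xgen r b 0 ω') ^ 2 ∂μ := by
    intro s
    have hexp : ∀ ω' : Ω, (a + Xgen r b s ω') ^ 2
        = a ^ 2 + (2 * a * Xgen r b s ω' + (Xgen r b s ω') ^ 2) := fun ω' => by ring
    have hsum_int : Integrable (fun ω' => 2 * a * Xgen r b s ω' + (Xgen r b s ω') ^ 2) μ := by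
      exact ((hXint s).const_mul _).add (hXsqint s)
    rw [integral_congr_ae (Filter.Eventually.of_forall hexp),
      integral_add (integrable_const _) hsum_int,
      integral_add ((hXint s).const_mul (2 * a)) (hXsqint s),
      integral_const_mul, hXmean s, integral_const, hEX2const s]
    simp
  -- measurability/integrability of σ²
  have hσmeas : Measurable (sigmaSqGen r γ w a b 0) := by
    unfold sigmaSqGen
    refine measurable_tsum_real fun ℓ => ?_
    exact ((((hXmeas _).const_add a).pow_const 2).const_add (w ^ 2)).const_mul _
  have hterm_int : ∀ ℓ : ℕ, Integrable
      (fun ω' => γ ^ ℓ * (w ^ 2 + (a + Xgen r b ((0 : ℤ) - (ℓ : ℤ)) ω') ^ 2)) μ := fun ℓ => by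
    exact ((integrable_const _).add (haX_int _)).const_mul _
  have hpartint : ∀ N : ℕ, Integrable (fun ω' => ∑ ℓ ∈ Finset.range N,
      γ ^ ℓ * (w ^ 2 + (a + Xgen r b ((0 : ℤ) - (ℓ : ℤ)) ω') ^ 2)) μ := fun N =>
    integrable_finset_sum _ fun ℓ _ => hterm_int ℓ
  have hσint : Integrable (sigmaSqGen r γ w a b 0) μ := by
    obtain ⟨N, hN⟩ :=
      ((hserS 0).eventually_lt_const (show (0 : ℝ≥0∞) < 1 by norm_num)).exists
    have hdiff : MemLp (fun ω' => sigmaSqGen r γ w a b 0 ω' - ∑ ℓ ∈ Finset.range N,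
        γ ^ ℓ * (w ^ 2 + (a + Xgen r b ((0 : ℤ) - (ℓ : ℤ)) ω') ^ 2)) 1 μ :=
      ⟨hσmeas.aestronglyMeasurable.sub
        (memLp_one_iff_integrable.mpr (hpartint N)).1, hN.trans_le le_top⟩
    rw [← memLp_one_iff_integrable]
    have heq : sigmaSqGen r γ w a b 0 = (fun ω' => sigmaSqGen r γ w a b 0 ω' -
        ∑ ℓ ∈ Finset.range N, γ ^ ℓ * (w ^ 2 + (a + Xgen r b ((0 : ℤ) - (ℓ : ℤ)) ω') ^ 2)) +
        (fun ω' => ∑ ℓ ∈ Finset.range N,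
          γ ^ ℓ * (w ^ 2 + (a + Xgen r b ((0 : ℤ) - (ℓ : ℤ)) ω') ^ 2)) := by
      funext ω'; simp
    rw [heq]
    exact hdiff.add (memLp_one_iff_integrable.mpr (hpartint N))
  -- value of ∫ σ²
  have hpart : ∀ N : ℕ, ∫ ω', (∑ ℓ ∈ Finset.range N,
      γ ^ ℓ * (w ^ 2 + (a + Xgen r b ((0 : ℤ) - (ℓ : ℤ)) ω') ^ 2)) ∂μ
      = ∑ ℓ ∈ Finset.range N,
        γ ^ ℓ * (w ^ 2 + (a ^ 2 + ∫ ω', (Xgen r b 0 ω') ^ 2 ∂μ)) := by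
    intro N
    rw [integral_finset_sum _ fun ℓ _ => hterm_int ℓ]
    refine Finset.sum_congr rfl fun ℓ _ => ?_
    rw [integral_const_mul, integral_add (integrable_const _) (haX_int _), integral_const,
      haX]
    simp
  have hσlim := tendsto_integral_of_eLpNorm_one_sub hpartint hσint (hserS 0)
  have hgeo : Tendsto (fun N => ∑ ℓ ∈ Finset.range N,
      γ ^ ℓ * (w ^ 2 + (a ^ 2 + ∫ ω', (Xgen r b 0 ω') ^ 2 ∂μ))) atTop
      (𝓝 ((1 - γ)⁻¹ * (w ^ 2 + (a ^ 2 + ∫ ω', (Xgen r b 0 ω') ^ 2 ∂μ)))) :=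
    ((hasSum_geometric_of_lt_one hγ0 hγ1).mul_right _).tendsto_sum_nat
  have hσval : ∫ ω', sigmaSqGen r γ w a b 0 ω' ∂μ
      = (1 - γ)⁻¹ * (w ^ 2 + (a ^ 2 + ∫ ω', (Xgen r b 0 ω') ^ 2 ∂μ)) :=
    tendsto_nhds_unique ((tendsto_congr hpart).mp hσlim) hgeo
  -- m0 = ∫ σ²
  have hm0σ : ∫ ω', (r 0 ω') ^ 2 ∂μ
      = (1 - γ)⁻¹ * (w ^ 2 + (a ^ 2 + ∫ ω', (Xgen r b 0 ω') ^ 2 ∂μ)) := by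
    calc ∫ ω', (r 0 ω') ^ 2 ∂μ
        = ∫ ω', (μ[fun ω' => (r 0 ω') ^ 2 | natFilt ζ ((0 : ℤ) - 1)]) ω' ∂μ :=
          (integral_condExp (hF ((0 : ℤ) - 1))).symm
      _ = ∫ ω', sigmaSqGen r γ w a b 0 ω' ∂μ := integral_congr_ae (hcondvar 0)
      _ = _ := hσval
  have h1γ : 0 < 1 - γ := by linarith
  have hEX2nonneg : 0 ≤ ∫ ω', (Xgen r b 0 ω') ^ 2 ∂μ :=
    integral_nonneg fun ω' => sq_nonneg _
  have hm0pos : 0 < ∫ ω', (r 0 ω') ^ 2 ∂μ := by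
    rw [hm0σ]
    have hC : 0 < w ^ 2 + (a ^ 2 + ∫ ω', (Xgen r b 0 ω') ^ 2 ∂μ) := by nlinarith
    exact mul_pos (inv_pos.mpr h1γ) hC
  -- summability
  have hc : Tendsto (fun N => ∑ j ∈ Finset.range N, (b j) ^ 2) atTop
      (𝓝 ((∫ ω', (Xgen r b 0 ω') ^ 2 ∂μ) / ∫ ω', (r 0 ω') ^ 2 ∂μ)) := by
    have h := (hXsq_lim 0).div_const (∫ ω', (r 0 ω') ^ 2 ∂μ)
    refine (tendsto_congr fun N => ?_).mp h
    field_simp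
  have hsum : HasSum (fun j => (b j) ^ 2)
      ((∫ ω', (Xgen r b 0 ω') ^ 2 ∂μ) / ∫ ω', (r 0 ω') ^ 2 ∂μ) :=
    (hasSum_iff_tendsto_nat_of_nonneg (fun j => sq_nonneg _) _).mpr hc
  refine ⟨hsum.summable, ?_⟩
  rw [hsum.tsum_eq, div_lt_iff₀ hm0pos]
  have hkey : (∫ ω', (r 0 ω') ^ 2 ∂μ) * (1 - γ)
      = w ^ 2 + (a ^ 2 + ∫ ω', (Xgen r b 0 ω') ^ 2 ∂μ) := by
    rw [hm0σ]
    field_simp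
  nlinarith [hwa]

end
end

section
/- Let ζ be a real random variable whose distribution has at least three distinct points in its support, and let C_1, C_2 be real random variables such that (C_1, C_2) is independent of ζ. If C_1 ζ² + 2 C_2 ζ − C_1 = 0 almost surely, then C_1 = 0 almost surely and C_2 = 0 almost surely. -/
open MeasureTheory ProbabilityTheory

lemma three_roots_zero (c₁ c₂ x y z : ℝ) (hxy : x ≠ y) (hxz : x ≠ z) (hyz : y ≠ z)
    (hx : c₁ * x ^ 2 + 2 * c₂ * x - c₁ = 0)
    (hy : c₁ * y ^ 2 + 2 * c₂ * y - c₁ = 0)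
    (hz : c₁ * z ^ 2 + 2 * c₂ * z - c₁ = 0) : c₁ = 0 ∧ c₂ = 0 := by
  have h1 : (x - y) * (c₁ * (x + y) + 2 * c₂) = 0 := by linear_combination hx - hy
  have h2 : (x - z) * (c₁ * (x + z) + 2 * c₂) = 0 := by linear_combination hx - hz
  have hxy' := sub_ne_zero.mpr hxy
  have hxz' := sub_ne_zero.mpr hxz
  have e1 : c₁ * (x + y) + 2 * c₂ = 0 := by
    rcases mul_eq_zero.mp h1 with h | h
    · exact absurd h hxy'
    · exact h
  have e2 : c₁ * (x + z) + 2 * c₂ = 0 := by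
    rcases mul_eq_zero.mp h2 with h | h
    · exact absurd h hxz'
    · exact h
  have hc₁ : c₁ = 0 := by
    have : c₁ * (y - z) = 0 := by linear_combination e1 - e2
    rcases mul_eq_zero.mp this with h | h
    · exact h
    · exact absurd (sub_eq_zero.mp h) hyz
  refine ⟨hc₁, ?_⟩
  subst hc₁
  have hx' : 2 * c₂ * x = 0 := by linarith [hx]
  have hy' : 2 * c₂ * y = 0 := by linarith [hy]
  rcases mul_eq_zero.mp hx' with h | h
  · rcases mul_eq_zero.mp h with h' | h'
    · norm_num at h'
    · exact h'
  · rcases mul_eq_zero.mp hy' with h' | h'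
    · rcases mul_eq_zero.mp h' with h'' | h''
      · norm_num at h''
      · exact h''
    · exact absurd (h.trans h'.symm) hxy

/-- If a continuous function vanishes ν-a.e. and every open neighborhood of x has
positive ν-measure, then it vanishes at x. -/
lemma eval_zero_of_ae_zero {ν : Measure ℝ} {f : ℝ → ℝ} (hf : Continuous f)
    {x : ℝ} (hx : ∀ U : Set ℝ, IsOpen U → x ∈ U → 0 < ν U)
    (h : ∀ᵐ t ∂ν, f t = 0) : f x = 0 := by
  by_contra hne
  have hU : IsOpen {t | f t ≠ 0} := (isOpen_ne).preimage hf
  have hpos := hx _ hU hne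
  have : ν {t | f t ≠ 0} = 0 := ae_iff.mp h
  rw [this] at hpos
  exact lt_irrefl 0 hpos

/-- If the law of `ζ` has at least three distinct points in its (topological) support,
`(C₁, C₂)` is independent of `ζ`, and `C₁ ζ² + 2 C₂ ζ − C₁ = 0` a.s., then
`C₁ = 0` a.s. and `C₂ = 0` a.s.
A point `x` is in the support of a law `ν` iff every open set containing `x` has
positive `ν`-measure. -/
theorem quadratic_in_independent_innovation_vanishes
    {Ω : Type*} [MeasurableSpace Ω] (μ : Measure Ω) [IsProbabilityMeasure μ]
    (ζ C₁ C₂ : Ω → ℝ) (hζ : Measurable ζ) (hC₁ : Measurable C₁) (hC₂ : Measurable C₂)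
    (hsupp : ∃ x y z : ℝ, x ≠ y ∧ x ≠ z ∧ y ≠ z ∧
      (∀ U : Set ℝ, IsOpen U → x ∈ U → 0 < μ.map ζ U) ∧
      (∀ U : Set ℝ, IsOpen U → y ∈ U → 0 < μ.map ζ U) ∧
      (∀ U : Set ℝ, IsOpen U → z ∈ U → 0 < μ.map ζ U))
    (hindep : IndepFun (fun ω => (C₁ ω, C₂ ω)) ζ μ)
    (heq : ∀ᵐ ω ∂μ, C₁ ω * (ζ ω) ^ 2 + 2 * C₂ ω * ζ ω - C₁ ω = 0) :
    C₁ =ᵐ[μ] 0 ∧ C₂ =ᵐ[μ] 0 := by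
  obtain ⟨x, y, z, hxy, hxz, hyz, hX, hY, hZ⟩ := hsupp
  set C : Ω → ℝ × ℝ := fun ω => (C₁ ω, C₂ ω) with hC
  have hCm : Measurable C := hC₁.prodMk hC₂
  set κ := μ.map C
  set ν := μ.map ζ
  have hprod : μ.map (fun ω => (C ω, ζ ω)) = κ.prod ν :=
    (indepFun_iff_map_prod_eq_prod_map_map hCm.aemeasurable hζ.aemeasurable).mp hindep
  have hg : Measurable fun p : (ℝ × ℝ) × ℝ =>
      p.1.1 * p.2 ^ 2 + 2 * p.1.2 * p.2 - p.1.1 := by fun_prop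
  have hmap : ∀ᵐ p ∂(μ.map (fun ω => (C ω, ζ ω))),
      p.1.1 * p.2 ^ 2 + 2 * p.1.2 * p.2 - p.1.1 = 0 := by
    have hs : MeasurableSet {p : (ℝ × ℝ) × ℝ | p.1.1 * p.2 ^ 2 + 2 * p.1.2 * p.2 - p.1.1 = 0} :=
      hg (measurableSet_singleton 0)
    exact (ae_map_iff (hCm.prodMk hζ).aemeasurable hs).mpr heq
  rw [hprod] at hmap
  have : IsProbabilityMeasure ν := Measure.isProbabilityMeasure_map hζ.aemeasurable
  have : IsProbabilityMeasure κ := Measure.isProbabilityMeasure_map hCm.aemeasurable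
  have hae : ∀ᵐ c ∂κ, ∀ᵐ t ∂ν, c.1 * t ^ 2 + 2 * c.2 * t - c.1 = 0 :=
    Measure.ae_ae_of_ae_prod hmap
  have hzero : ∀ᵐ c ∂κ, c = ((0 : ℝ), (0 : ℝ)) := by
    filter_upwards [hae] with c hc
    have hcont : Continuous fun t : ℝ => c.1 * t ^ 2 + 2 * c.2 * t - c.1 := by continuity
    have h1 := eval_zero_of_ae_zero hcont hX hc
    have h2 := eval_zero_of_ae_zero hcont hY hc
    have h3 := eval_zero_of_ae_zero hcont hZ hc
    obtain ⟨e1, e2⟩ := three_roots_zero c.1 c.2 x y z hxy hxz hyz h1 h2 h3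
    exact Prod.ext e1 e2
  have hzero' : ∀ᵐ ω ∂μ, C ω = ((0 : ℝ), (0 : ℝ)) := by
    have hs : MeasurableSet {c : ℝ × ℝ | c = ((0 : ℝ), (0 : ℝ))} := measurableSet_eq
    exact (ae_map_iff hCm.aemeasurable hs).mp hzero
  constructor
  · filter_upwards [hzero'] with ω hω
    exact congrArg Prod.fst hω
  · filter_upwards [hzero'] with ω hω
    exact congrArg Prod.snd hω
end
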